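/- arXiv:2111.12974 — 5 statements merged into one kernel-verified Lean document; each statement's English description precedes it below -/
import Mathlib

section
/- Let b ≥ 1 be an integer, β = (−b + √(b²+4))/2, and let p_n/q_n be the continued fraction convergents of β (q_0 = 1, q_1 = b, q_{n+1} = b q_n + q_{n−1}, and p_n = q_{n−1}). Then for all n ≥ 1, β = q_{n−1}/q_n + (−1)^n β^{n+1}/q_n. -/
open Real

/-!
`β` is the positive root of `x² + b x - 1 = 0`. For the error `e n = β q_{n+1} - q_n` the
recurrence and `β b - 1 = -β²` give `e (n+1) = -β e n`, with `e 0 = β b - 1 = -β²`; hence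
`e n = (-β)^(n+1) β`, which is the identity after dividing by `q_{n+1} > 0`.
-/

theorem sq_add_mul_eq_one_of_eq_root {b β : ℝ} (hβ : β = (-b + √(b ^ 2 + 4)) / 2) :
    β ^ 2 + b * β = 1 := by
  have hsq : √(b ^ 2 + 4) ^ 2 = b ^ 2 + 4 := Real.sq_sqrt (by positivity)
  rw [hβ]
  linear_combination hsq / 4

section Recurrence

variable {R : Type*} [CommRing R] {b x : R} {q : ℕ → R}

theorem mul_succ_sub_eq_neg_pow_mul (hx : x ^ 2 + b * x = 1) (h0 : q 0 = 1) (h1 : q 1 = b)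
    (hrec : ∀ n, q (n + 2) = b * q (n + 1) + q n) (n : ℕ) :
    x * q (n + 1) - q n = (-x) ^ (n + 1) * x := by
  induction n with
  | zero => rw [h0, h1]; linear_combination hx
  | succ n ih =>
    rw [hrec, pow_succ]
    linear_combination (-x) * ih + q (n + 1) * hx

end Recurrence

theorem pos_of_two_step_recurrence {b : ℕ} (hb : 1 ≤ b) {q : ℕ → ℕ} (h0 : q 0 = 1)
    (h1 : q 1 = b) (hrec : ∀ n, q (n + 2) = b * q (n + 1) + q n) (n : ℕ) : 0 < q n := by
  induction n using Nat.twoStepInduction with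
  | zero => omega
  | one => omega
  | more n ih _ => rw [hrec]; omega

theorem beta_convergent_identity (b : ℕ) (hb : 1 ≤ b)
    (β : ℝ) (hβ : β = (-(b : ℝ) + Real.sqrt ((b : ℝ) ^ 2 + 4)) / 2)
    (q : ℕ → ℕ) (h0 : q 0 = 1) (h1 : q 1 = b)
    (hrec : ∀ n : ℕ, q (n + 2) = b * q (n + 1) + q n) :
    ∀ n : ℕ, 1 ≤ n →
      β = (q (n - 1) : ℝ) / (q n : ℝ) + (-1) ^ n * β ^ (n + 1) / (q n : ℝ) := by
  intro n hn
  obtain ⟨m, rfl⟩ : ∃ m, n = m + 1 := ⟨n - 1, by omega⟩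
  have hq : (q (m + 1) : ℝ) ≠ 0 := by
    exact_mod_cast (pos_of_two_step_recurrence hb h0 h1 hrec (m + 1)).ne'
  have herr : β * q (m + 1) - q m = (-β) ^ (m + 1) * β :=
    mul_succ_sub_eq_neg_pow_mul (q := fun n ↦ (q n : ℝ)) (sq_add_mul_eq_one_of_eq_root hβ)
      (by simp [h0]) (by simp [h1]) (fun n ↦ by simp [hrec]) m
  rw [neg_pow] at herr
  rw [Nat.add_sub_cancel]
  field_simp
  linear_combination herr
end

section
/- Let (a_n) be real numbers with |a_n| ≤ 1/2 and |a_n| ≤ C/n for all n, and let 2 ≤ N ≤ M be integers. Then ∏_{n=N}^{M} (1 + a_n) ≥ 1 − (|∑_{n=N}^{M} a_n| + C²/(N−1)). -/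
/-!
Since `1 + x ≥ exp x * (1 - x ^ 2)` for `x ≥ -1`, the product is at least
`exp S * ∏ (1 - a n ^ 2) ≥ exp S * (1 - Q)`, where `S = ∑ a n` and `Q = ∑ a n ^ 2`; and
`exp S * (1 - Q) ≥ (1 - |S|) * (1 - Q) ≥ 1 - |S| - Q` when `Q ≤ 1`
(for `Q > 1` the right side is negative and the product positive). Finally `|a n| ≤ C / n` bounds
`Q` by `C ^ 2 ∑_{n ≥ N} 1 / n ^ 2 ≤ C ^ 2 / (N - 1)`.
-/

open Finset Real

theorem sum_Ioc_inv_sq_le {α : Type*} [Field α] [LinearOrder α] [IsStrictOrderedRing α]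
    {k : ℕ} (hk : k ≠ 0) (n : ℕ) : ∑ i ∈ Ioc k n, ((i : α) ^ 2)⁻¹ ≤ (k : α)⁻¹ := by
  rcases le_or_gt k n with hkn | hnk
  · grw [sum_Ioc_inv_sq_le_sub hk hkn]
    exact sub_le_self _ (by positivity)
  · rw [Ioc_eq_empty_of_le hnk.le, sum_empty]
    positivity

theorem sum_Ioc_sq_le_of_abs_le_div {a : ℕ → ℝ} {C : ℝ} (ha : ∀ n : ℕ, 1 ≤ n → |a n| ≤ C / n)
    {k : ℕ} (hk : k ≠ 0) (m : ℕ) : ∑ n ∈ Ioc k m, a n ^ 2 ≤ C ^ 2 / k := by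
  have hterm : ∀ n ∈ Ioc k m, a n ^ 2 ≤ C ^ 2 * ((n : ℝ) ^ 2)⁻¹ := fun n hn => by
    rw [← sq_abs, ← div_eq_mul_inv, ← div_pow]
    exact pow_le_pow_left₀ (abs_nonneg _) (ha n (by grind)) 2
  calc ∑ n ∈ Ioc k m, a n ^ 2 ≤ ∑ n ∈ Ioc k m, C ^ 2 * ((n : ℝ) ^ 2)⁻¹ := sum_le_sum hterm
    _ = C ^ 2 * ∑ n ∈ Ioc k m, ((n : ℝ) ^ 2)⁻¹ := (mul_sum _ _ _).symm
    _ ≤ C ^ 2 * (k : ℝ)⁻¹ := mul_le_mul_of_nonneg_left (sum_Ioc_inv_sq_le hk m) (sq_nonneg C)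
    _ = C ^ 2 / k := (div_eq_mul_inv _ _).symm

theorem one_sub_sum_le_prod_one_sub {ι R : Type*} [CommRing R] [LinearOrder R]
    [IsStrictOrderedRing R] (s : Finset ι) {b : ι → R} (hb₀ : ∀ i ∈ s, 0 ≤ b i)
    (hb₁ : ∀ i ∈ s, b i ≤ 1) : 1 - ∑ i ∈ s, b i ≤ ∏ i ∈ s, (1 - b i) := by
  induction s using Finset.cons_induction with
  | empty => simp
  | cons j s hj ih =>
    simp only [mem_cons, forall_eq_or_imp] at hb₀ hb₁
    rw [sum_cons, prod_cons]
    have ih' := ih hb₀.2 hb₁.2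
    have hsum : 0 ≤ ∑ i ∈ s, b i := sum_nonneg hb₀.2
    have hprod : 0 ≤ ∏ i ∈ s, (1 - b i) := prod_nonneg fun i hi => sub_nonneg.2 (hb₁.2 i hi)
    nlinarith [mul_le_mul_of_nonneg_left ih' (sub_nonneg.2 hb₁.1)]

theorem exp_mul_one_sub_sq_le_one_add {x : ℝ} (hx : -1 ≤ x) : exp x * (1 - x ^ 2) ≤ 1 + x := by
  have hexp : exp x * (1 - x) ≤ 1 := by
    calc exp x * (1 - x) ≤ exp x * exp (-x) := by gcongr; linarith [add_one_le_exp (-x)]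
      _ = 1 := by rw [← exp_add, add_neg_cancel, exp_zero]
  calc exp x * (1 - x ^ 2) = exp x * (1 - x) * (1 + x) := by ring
    _ ≤ 1 * (1 + x) := by gcongr; linarith
    _ = 1 + x := one_mul _

theorem exp_sum_mul_one_sub_sum_sq_le_prod_one_add {ι : Type*} (s : Finset ι) {a : ι → ℝ}
    (ha : ∀ i ∈ s, |a i| ≤ 1) :
    exp (∑ i ∈ s, a i) * (1 - ∑ i ∈ s, a i ^ 2) ≤ ∏ i ∈ s, (1 + a i) := by
  have hsq : ∀ i ∈ s, a i ^ 2 ≤ 1 := fun i hi => by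
    simpa using pow_le_pow_left₀ (abs_nonneg _) (ha i hi) 2
  calc exp (∑ i ∈ s, a i) * (1 - ∑ i ∈ s, a i ^ 2)
      ≤ exp (∑ i ∈ s, a i) * ∏ i ∈ s, (1 - a i ^ 2) := by
        gcongr
        exact one_sub_sum_le_prod_one_sub s (fun i _ => sq_nonneg _) hsq
    _ = ∏ i ∈ s, exp (a i) * (1 - a i ^ 2) := by rw [exp_sum, prod_mul_distrib]
    _ ≤ ∏ i ∈ s, (1 + a i) := by
        apply prod_le_prod
        · exact fun i hi => mul_nonneg (exp_pos _).le (sub_nonneg.2 (hsq i hi))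
        · exact fun i hi => exp_mul_one_sub_sq_le_one_add (abs_le.1 (ha i hi)).1

theorem one_sub_abs_add_le_exp_mul {S Q : ℝ} (hQ₀ : 0 ≤ Q) (hQ₁ : Q ≤ 1) :
    1 - (|S| + Q) ≤ exp S * (1 - Q) := by
  have hexp : 1 - |S| ≤ exp S := by linarith [add_one_le_exp S, neg_abs_le S]
  calc 1 - (|S| + Q) ≤ (1 - |S|) * (1 - Q) := by nlinarith [abs_nonneg S]
    _ ≤ exp S * (1 - Q) := by gcongr

theorem prod_one_add_ge_general (a : ℕ → ℝ) (C : ℝ)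
    (h1 : ∀ n, |a n| ≤ 1 / 2) (h2 : ∀ n : ℕ, 1 ≤ n → |a n| ≤ C / n)
    (N M : ℕ) (hN : 2 ≤ N) :
    ∏ n ∈ Finset.Icc N M, (1 + a n) ≥
      1 - (|∑ n ∈ Finset.Icc N M, a n| + C ^ 2 / (N - 1 : ℝ)) := by
  set S := ∑ n ∈ Icc N M, a n
  set Q := ∑ n ∈ Icc N M, a n ^ 2
  have ha : ∀ n, |a n| ≤ 1 := fun n => (h1 n).trans (by norm_num)
  have hQC : Q ≤ C ^ 2 / (N - 1 : ℝ) := by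
    have hsum := sum_Ioc_sq_le_of_abs_le_div h2 (k := N - 1) (by omega) M
    rwa [Ioc_sub_one_left_eq_Icc_of_not_isMin (by simpa using (by omega : N ≠ 0)),
      Nat.cast_sub (by omega), Nat.cast_one] at hsum
  have hprod := exp_sum_mul_one_sub_sum_sq_le_prod_one_add (Icc N M) fun n _ => ha n
  rcases le_or_gt Q 1 with hQ₁ | hQ₁
  · have hQ₀ : 0 ≤ Q := sum_nonneg fun n _ => sq_nonneg (a n)
    calc 1 - (|S| + C ^ 2 / (N - 1 : ℝ)) ≤ 1 - (|S| + Q) := by linarith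
      _ ≤ exp S * (1 - Q) := one_sub_abs_add_le_exp_mul hQ₀ hQ₁
      _ ≤ ∏ n ∈ Icc N M, (1 + a n) := hprod
  · have hpos : 0 < ∏ n ∈ Icc N M, (1 + a n) :=
      prod_pos fun n _ => by linarith [(abs_le.1 (h1 n)).1]
    linarith [abs_nonneg S]

theorem prod_one_add_ge (a : ℕ → ℝ) (C : ℝ) (hC : 0 < C)
    (h1 : ∀ n, |a n| ≤ 1 / 2) (h2 : ∀ n : ℕ, 1 ≤ n → |a n| ≤ C / n)
    (N M : ℕ) (hN : 2 ≤ N) (hNM : N ≤ M) :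
    ∏ n ∈ Finset.Icc N M, (1 + a n) ≥
      1 - (|∑ n ∈ Finset.Icc N M, a n| + C ^ 2 / (N - 1 : ℝ)) :=
  prod_one_add_ge_general a C h1 h2 N M hN
end

section
/- Let x, y, z be real numbers with 0 < max{|y|, |z|} ≤ x < 1/2, and assume 2z² ≤ (x+y)² and ((x+y)² − z²)/x² ≥ 1/2. Then (sin²(x+y) − sin²(z))/sin²(x) ≥ (((x+y)² − z²)/x²)·(1 − (2x|y| + (4/3)y² + 6x⁶/7! + x⁵|y| + z²)). -/
/-!
Write `sin² t = (1 - cos 2t) / 2`. The partial sums of the cosine series bound `cos` alternately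
from above and below on all of `ℝ`: integrating such a bound from `0` gives the next one, for
the sine and then for the cosine. So `sin² (x + y)` and `sin² z` are bounded below and above,
and `sin² x` above, by Taylor polynomials, and the claim becomes a polynomial inequality. After
dividing out `(x + y)² - z² ≥ 0` it follows from crude estimates for `x < 1/2`, `|y| ≤ x`. When
the right-hand side is negative, it is enough that `sin² z ≤ sin² (x + y)`, as
`|z| ≤ x + y ≤ π / 2`.
-/

open Real

noncomputable def cosTaylor (n : ℕ) (t : ℝ) : ℝ :=
  ∑ k ∈ Finset.range n, (-1) ^ k * t ^ (2 * k) / (2 * k).factorial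

noncomputable def sinTaylor (n : ℕ) (t : ℝ) : ℝ :=
  ∑ k ∈ Finset.range n, (-1) ^ k * t ^ (2 * k + 1) / (2 * k + 1).factorial

theorem hasDerivAt_pow_succ_div_factorial (m : ℕ) (t : ℝ) :
    HasDerivAt (fun t : ℝ => t ^ (m + 1) / (m + 1).factorial) (t ^ m / m.factorial) t := by
  refine ((hasDerivAt_pow (m + 1) t).div_const _).congr_deriv ?_
  rw [Nat.factorial_succ]
  push_cast
  field_simp

theorem hasDerivAt_sinTaylor (n : ℕ) (t : ℝ) :
    HasDerivAt (sinTaylor n) (cosTaylor n t) t := by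
  unfold sinTaylor cosTaylor
  refine HasDerivAt.fun_sum fun k _ => ?_
  simpa only [mul_div_assoc] using
    (hasDerivAt_pow_succ_div_factorial (2 * k) t).const_mul ((-1 : ℝ) ^ k)

theorem hasDerivAt_cosTaylor_succ (n : ℕ) (t : ℝ) :
    HasDerivAt (cosTaylor (n + 1)) (-sinTaylor n t) t := by
  have h : cosTaylor (n + 1) = fun t => ∑ k ∈ Finset.range n,
      (-1 : ℝ) ^ (k + 1) * (t ^ (2 * k + 1 + 1) / (2 * k + 1 + 1).factorial) + 1 := by
    ext t
    simp [cosTaylor, Finset.sum_range_succ', mul_add, mul_div_assoc]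
  rw [h, sinTaylor, ← Finset.sum_neg_distrib]
  refine (HasDerivAt.fun_sum fun k _ => ?_).add_const 1
  refine ((hasDerivAt_pow_succ_div_factorial (2 * k + 1) t).const_mul _).congr_deriv ?_
  ring

theorem cosTaylor_neg (n : ℕ) (t : ℝ) : cosTaylor n (-t) = cosTaylor n t := by
  simp [cosTaylor, pow_mul]

theorem nonneg_of_hasDerivAt_nonneg {f f' : ℝ → ℝ} (hf : ∀ t, HasDerivAt f (f' t) t)
    (h₀ : f 0 = 0) (hf' : ∀ t, 0 ≤ t → 0 ≤ f' t) {t : ℝ} (ht : 0 ≤ t) : 0 ≤ f t := by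
  have hmono : MonotoneOn f (Set.Ici 0) :=
    monotoneOn_of_hasDerivWithinAt_nonneg (convex_Ici 0)
      (fun s _ => (hf s).continuousAt.continuousWithinAt)
      (fun s _ => (hf s).hasDerivWithinAt)
      (fun s hs => hf' s (interior_subset hs))
  simpa [h₀] using hmono Set.self_mem_Ici ht ht

theorem neg_one_pow_mul_sin_sub_sinTaylor_nonneg {n : ℕ}
    (hcos : ∀ t, 0 ≤ t → 0 ≤ (-1) ^ n * (cos t - cosTaylor n t)) {t : ℝ} (ht : 0 ≤ t) :
    0 ≤ (-1) ^ n * (sin t - sinTaylor n t) :=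
  nonneg_of_hasDerivAt_nonneg
    (fun s => ((hasDerivAt_sin s).sub (hasDerivAt_sinTaylor n s)).const_mul _)
    (by simp [sinTaylor]) hcos ht

theorem neg_one_pow_mul_cos_sub_cosTaylor_nonneg_of_nonneg {n : ℕ} (hn : n ≠ 0) {t : ℝ}
    (ht : 0 ≤ t) : 0 ≤ (-1) ^ n * (cos t - cosTaylor n t) := by
  induction n generalizing t with
  | zero => exact absurd rfl hn
  | succ n ih =>
    rcases eq_or_ne n 0 with rfl | hn
    · simpa [cosTaylor] using cos_le_one t
    refine nonneg_of_hasDerivAt_nonneg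
      (f := fun s => (-1) ^ (n + 1) * (cos s - cosTaylor (n + 1) s))
      (fun s => ?_) (by simp [cosTaylor, Finset.sum_range_succ'])
      (fun s hs => neg_one_pow_mul_sin_sub_sinTaylor_nonneg (fun _ => ih hn) hs) ht
    refine (((hasDerivAt_cos s).sub (hasDerivAt_cosTaylor_succ n s)).const_mul _).congr_deriv ?_
    ring

theorem neg_one_pow_mul_cos_sub_cosTaylor_nonneg {n : ℕ} (hn : n ≠ 0) (t : ℝ) :
    0 ≤ (-1) ^ n * (cos t - cosTaylor n t) := by
  rcases le_total 0 t with ht | ht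
  · exact neg_one_pow_mul_cos_sub_cosTaylor_nonneg_of_nonneg hn ht
  · simpa [cosTaylor_neg] using
      neg_one_pow_mul_cos_sub_cosTaylor_nonneg_of_nonneg hn (neg_nonneg.mpr ht)

theorem neg_one_pow_mul_sub_sin_sq_nonneg {n : ℕ} (hn : n ≠ 0) (t : ℝ) :
    0 ≤ (-1) ^ n * ((1 - cosTaylor n (2 * t)) / 2 - sin t ^ 2) := by
  have h := neg_one_pow_mul_cos_sub_cosTaylor_nonneg hn (2 * t)
  rw [sin_sq_eq_half_sub]
  linarith

theorem sin_sq_le_taylor_deg6 (t : ℝ) : sin t ^ 2 ≤ t ^ 2 - t ^ 4 / 3 + 2 * t ^ 6 / 45 := by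
  have h := neg_one_pow_mul_sub_sin_sq_nonneg (n := 4) (by norm_num) t
  norm_num [cosTaylor, Finset.sum_range_succ, Nat.factorial] at h
  linarith

theorem taylor_deg8_le_sin_sq (t : ℝ) :
    t ^ 2 - t ^ 4 / 3 + 2 * t ^ 6 / 45 - t ^ 8 / 315 ≤ sin t ^ 2 := by
  have h := neg_one_pow_mul_sub_sin_sq_nonneg (n := 5) (by norm_num) t
  norm_num [cosTaylor, Finset.sum_range_succ, Nat.factorial] at h
  linarith

theorem sin_sq_le_taylor_deg10 (t : ℝ) :
    sin t ^ 2 ≤ t ^ 2 * (1 - t ^ 2 / 3 + 2 / 45 * t ^ 4 - t ^ 6 / 315 + 2 / 14175 * t ^ 8) := by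
  have h := neg_one_pow_mul_sub_sin_sq_nonneg (n := 6) (by norm_num) t
  norm_num [cosTaylor, Finset.sum_range_succ, Nat.factorial] at h
  linarith

theorem pow_eight_le_sub_mul {a z : ℝ} (h : 2 * z ^ 2 ≤ a ^ 2) :
    a ^ 8 ≤ (a ^ 2 - z ^ 2) * (a ^ 6 + 2 * a ^ 4 * z ^ 2) := by
  have : 0 ≤ a ^ 4 * z ^ 2 * (a ^ 2 - 2 * z ^ 2) := by
    have := sub_nonneg.2 h
    positivity
  linear_combination this

/-- The right-hand side is `(p (x + y) - p z) / ((x + y) ^ 2 - z ^ 2)` for the degree-6 Taylor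
polynomial `p` of `sin ^ 2`, corrected by the degree-8 term through `pow_eight_le_sub_mul`. -/
theorem sin_sq_ratio_polynomial_bound {x y z : ℝ} (hx0 : 0 ≤ x) (hx : x < 1 / 2)
    (hy : |y| ≤ x) :
    (1 - (2 * x * |y| + 4 / 3 * y ^ 2 + 6 * x ^ 6 / 5040 + x ^ 5 * |y| + z ^ 2)) *
        (1 - x ^ 2 / 3 + 2 / 45 * x ^ 4 - x ^ 6 / 315 + 2 / 14175 * x ^ 8) ≤
      1 - ((x + y) ^ 2 + z ^ 2) / 3 + 2 / 45 * ((x + y) ^ 4 + (x + y) ^ 2 * z ^ 2 + z ^ 4)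
        - ((x + y) ^ 6 + 2 * (x + y) ^ 4 * z ^ 2) / 315 := by
  set a := x + y with ha
  obtain ⟨B, hB_def⟩ : ∃ B, B =
      -1 / 3 + 2 / 45 * (a ^ 2 + x ^ 2) - (a ^ 4 + a ^ 2 * x ^ 2 + x ^ 4) / 315 := ⟨_, rfl⟩
  have hx2 : x ^ 2 ≤ 1 / 4 := by nlinarith
  have ha0 : 0 ≤ a := by linarith [neg_abs_le y]
  have ha2 : a ^ 2 ≤ 1 := by nlinarith [le_abs_self y]
  have hE : 0 ≤ 2 * x * |y| + 4 / 3 * y ^ 2 + 6 * x ^ 6 / 5040 + x ^ 5 * |y| + z ^ 2 := by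
    positivity
  have hK : 11 / 12 ≤ 1 - x ^ 2 / 3 + 2 / 45 * x ^ 4 - x ^ 6 / 315 + 2 / 14175 * x ^ 8 := by
    nlinarith [pow_nonneg hx0 4, pow_nonneg hx0 6, pow_nonneg hx0 8]
  -- By `hE` and `hK` the left-hand side is at most the second factor minus `11/12` times the
  -- error term; that gap splits into the nonnegative parts `hGy`, `hGz`, `hGx`, where `B` is
  -- the coefficient of `a ^ 2 - x ^ 2`.
  have hB : |B| ≤ 17 / 50 := by
    rw [abs_le, hB_def]
    constructor <;>
      nlinarith [sq_nonneg a, sq_nonneg x, mul_nonneg (sq_nonneg a) (sq_nonneg x)]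
  have hd : |a ^ 2 - x ^ 2| ≤ 2 * x * |y| + |y| ^ 2 := by
    calc |a ^ 2 - x ^ 2| = |2 * x * y + y ^ 2| := by rw [ha]; ring_nf
      _ ≤ |2 * x * y| + |y ^ 2| := abs_add_le _ _
      _ = 2 * x * |y| + |y| ^ 2 := by
        rw [abs_mul, abs_mul, abs_of_nonneg hx0, abs_two, abs_pow]
  have hGy : 0 ≤ 11 / 12 * (2 * x * |y| + 4 / 3 * y ^ 2 + x ^ 5 * |y|) + (a ^ 2 - x ^ 2) * B := by
    have hprod : |(a ^ 2 - x ^ 2) * B| ≤ (2 * x * |y| + |y| ^ 2) * (17 / 50) :=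
      (abs_mul _ _).trans_le (mul_le_mul hd hB (abs_nonneg _) (by positivity))
    nlinarith [neg_abs_le ((a ^ 2 - x ^ 2) * B), mul_nonneg hx0 (abs_nonneg y),
      mul_nonneg (pow_nonneg hx0 5) (abs_nonneg y), sq_abs y]
  have hGz : 0 ≤ 7 / 12 * z ^ 2 + 2 / 45 * a ^ 2 * z ^ 2 + 2 / 45 * z ^ 4
      - 2 / 315 * a ^ 4 * z ^ 2 := by
    nlinarith [mul_nonneg (sq_nonneg z) (sq_nonneg a), sq_nonneg (z ^ 2),
      mul_nonneg (sq_nonneg z) (sub_nonneg.2 ha2)]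
  have hGx : 0 ≤ 11 / 10080 * x ^ 6 - 2 / 14175 * x ^ 8 := by
    nlinarith [pow_nonneg hx0 6]
  linear_combination
    mul_nonneg hE (sub_nonneg.2 hK) + hGy + hGz + hGx + (a ^ 2 - x ^ 2) * hB_def

theorem sub_sq_mul_le_sin_sq_sub_sin_sq {x y z : ℝ} (hx0 : 0 ≤ x) (hx : x < 1 / 2)
    (hy : |y| ≤ x) (h : 2 * z ^ 2 ≤ (x + y) ^ 2) :
    ((x + y) ^ 2 - z ^ 2) *
        ((1 - (2 * x * |y| + 4 / 3 * y ^ 2 + 6 * x ^ 6 / 5040 + x ^ 5 * |y| + z ^ 2)) *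
          (1 - x ^ 2 / 3 + 2 / 45 * x ^ 4 - x ^ 6 / 315 + 2 / 14175 * x ^ 8)) ≤
      sin (x + y) ^ 2 - sin z ^ 2 := by
  have hs : 0 ≤ (x + y) ^ 2 - z ^ 2 := by linarith [sq_nonneg z]
  calc _ ≤ ((x + y) ^ 2 - z ^ 2) * (1 - ((x + y) ^ 2 + z ^ 2) / 3
          + 2 / 45 * ((x + y) ^ 4 + (x + y) ^ 2 * z ^ 2 + z ^ 4)
          - ((x + y) ^ 6 + 2 * (x + y) ^ 4 * z ^ 2) / 315) :=
        mul_le_mul_of_nonneg_left (sin_sq_ratio_polynomial_bound hx0 hx hy) hs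
    _ ≤ ((x + y) ^ 2 - (x + y) ^ 4 / 3 + 2 * (x + y) ^ 6 / 45 - (x + y) ^ 8 / 315) -
        (z ^ 2 - z ^ 4 / 3 + 2 * z ^ 6 / 45) := by
      linarith [pow_eight_le_sub_mul h]
    _ ≤ sin (x + y) ^ 2 - sin z ^ 2 := by
      linarith [taylor_deg8_le_sin_sq (x + y), sin_sq_le_taylor_deg6 z]

theorem sin_sq_le_sin_sq_of_abs_le {z a : ℝ} (h : |z| ≤ a) (ha : a ≤ π / 2) :
    sin z ^ 2 ≤ sin a ^ 2 := by
  have : cos (2 * a) ≤ cos (2 * z) := by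
    rw [← cos_abs (2 * z), abs_mul, abs_two]
    exact cos_le_cos_of_nonneg_of_le_pi (by positivity) (by linarith) (by linarith)
  rw [sin_sq_eq_half_sub, sin_sq_eq_half_sub]
  linarith

theorem sin_sq_ratio_lower_bound_general (x y z : ℝ)
    (hpos : 0 < max |y| |z|) (hxy : max |y| |z| ≤ x) (hx : x < 1 / 2)
    (h1 : 2 * z ^ 2 ≤ (x + y) ^ 2) :
    (Real.sin (x + y) ^ 2 - Real.sin z ^ 2) / Real.sin x ^ 2 ≥
      (((x + y) ^ 2 - z ^ 2) / x ^ 2) *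
        (1 - (2 * x * |y| + (4 / 3) * y ^ 2 + 6 * x ^ 6 / 5040 + x ^ 5 * |y| + z ^ 2)) := by
  have hx0 : 0 < x := hpos.trans_le hxy
  have hy : |y| ≤ x := (le_max_left _ _).trans hxy
  have hsin : 0 < sin x ^ 2 := by
    have := sin_pos_of_pos_of_lt_pi hx0 (by linarith [pi_gt_three])
    positivity
  rw [ge_iff_le, le_div_iff₀ hsin]
  rcases le_or_gt (((x + y) ^ 2 - z ^ 2) / x ^ 2 *
      (1 - (2 * x * |y| + (4 / 3) * y ^ 2 + 6 * x ^ 6 / 5040 + x ^ 5 * |y| + z ^ 2))) 0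
    with hR | hR
  · have hza : |z| ≤ x + y := by
      rw [← abs_of_nonneg (by linarith [neg_abs_le y] : 0 ≤ x + y)]
      exact sq_le_sq.1 (by linarith [sq_nonneg z])
    have := sin_sq_le_sin_sq_of_abs_le hza (by linarith [le_abs_self y, pi_gt_three])
    exact (mul_nonpos_of_nonpos_of_nonneg hR hsin.le).trans (sub_nonneg.2 this)
  calc _ ≤ _ * (x ^ 2 * (1 - x ^ 2 / 3 + 2 / 45 * x ^ 4 - x ^ 6 / 315 + 2 / 14175 * x ^ 8)) :=
        mul_le_mul_of_nonneg_left (sin_sq_le_taylor_deg10 x) hR.le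
    _ = ((x + y) ^ 2 - z ^ 2) *
        ((1 - (2 * x * |y| + 4 / 3 * y ^ 2 + 6 * x ^ 6 / 5040 + x ^ 5 * |y| + z ^ 2)) *
          (1 - x ^ 2 / 3 + 2 / 45 * x ^ 4 - x ^ 6 / 315 + 2 / 14175 * x ^ 8)) := by
      field_simp
    _ ≤ sin (x + y) ^ 2 - sin z ^ 2 := sub_sq_mul_le_sin_sq_sub_sin_sq hx0.le hx hy h1

theorem sin_sq_ratio_lower_bound (x y z : ℝ)
    (hpos : 0 < max |y| |z|) (hxy : max |y| |z| ≤ x) (hx : x < 1 / 2)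
    (h1 : 2 * z ^ 2 ≤ (x + y) ^ 2)
    (h2 : ((x + y) ^ 2 - z ^ 2) / x ^ 2 ≥ 1 / 2) :
    (Real.sin (x + y) ^ 2 - Real.sin z ^ 2) / Real.sin x ^ 2 ≥
      (((x + y) ^ 2 - z ^ 2) / x ^ 2) *
        (1 - (2 * x * |y| + (4 / 3) * y ^ 2 + 6 * x ^ 6 / 5040 + x ^ 5 * |y| + z ^ 2)) :=
  sin_sq_ratio_lower_bound_general x y z hpos hxy hx h1
end

section
/- Let β = (−5 + √29)/2 = [0; 5, 5, 5, …] with convergent denominators q_0 = 1, q_1 = 5, q_{n+1} = 5q_n + q_{n−1}. Let n ≥ 2 and let N be an integer with q_n ≤ N < q_{n+1}, and let ∑_{i=0}^{n} b_{i+1} q_i be the Ostrowski expansion of q_{n+1} − (N+1) (possibly with leading zero coefficients). Then (q_{n+1} − 1)/N ≤ 27/(25 − (5·b_{n+1} + b_n)). -/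
/-!
Write `M = q_{n+1} - (N+1) = ∑ b_{i+1} q_i`. The Ostrowski digit rules make every partial sum
`∑_{i<j} b_{i+1} q_i` smaller than `q_j`, so `M < b_{n+1} q_n + (b_n + 1) q_{n-1}`. Since
`q_{n+1} = 5 q_n + q_{n-1}` and `q_n ≥ 5 q_{n-1}`, this gives
`N ≥ (5 - b_{n+1}) q_n - b_n q_{n-1} ≥ (25 - 5 b_{n+1} - b_n) q_{n-1}`, while
`q_{n+1} = 26 q_{n-1} + 5 q_{n-2} ≤ 27 q_{n-1}`. Dividing the two bounds gives the claim.
The same argument works for any constant partial quotient `a`, with `27 = a² + 2`.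
-/

open Finset

/-- The convergent denominators of `[0; a 1, a 2, …]`. -/
structure IsConvergentDenom (a q : ℕ → ℕ) : Prop where
  zero : q 0 = 1
  one : q 1 = a 1
  add_two : ∀ m, q (m + 2) = a (m + 2) * q (m + 1) + q m

/-- Ostrowski's digit conditions, with the digit `c (i + 1)` multiplying `q i`. -/
structure IsOstrowskiDigits (a c : ℕ → ℕ) : Prop where
  one_lt : c 1 < a 1
  le : ∀ i, 2 ≤ i → c i ≤ a i
  eq_zero_of_eq : ∀ i, 2 ≤ i → c i = a i → c (i - 1) = 0

variable {q c : ℕ → ℕ}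

theorem le_sum_range_add_two (c q : ℕ → ℕ) (m : ℕ) :
    c (m + 2) * q (m + 1) + c (m + 1) * q m ≤ ∑ i ∈ range (m + 2), c (i + 1) * q i := by
  simp only [sum_range_succ, Nat.add_assoc, Nat.reduceAdd]
  omega

section

variable {a : ℕ → ℕ}

namespace IsConvergentDenom

theorem mul_le_succ (hq : IsConvergentDenom a q) (m : ℕ) : a (m + 1) * q m ≤ q (m + 1) := by
  cases m with
  | zero => simp [hq.zero, hq.one]
  | succ m => rw [hq.add_two m]; exact Nat.le_add_right _ _

theorem pos (hq : IsConvergentDenom a q) (ha : ∀ i, 0 < a i) (m : ℕ) : 0 < q m := by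
  induction m with
  | zero => simp [hq.zero]
  | succ m ih => exact (Nat.mul_pos (ha _) ih).trans_le (hq.mul_le_succ m)

end IsConvergentDenom

namespace IsOstrowskiDigits

theorem le_of_one_le (hc : IsOstrowskiDigits a c) {i : ℕ} (hi : 1 ≤ i) : c i ≤ a i := by
  obtain rfl | hi := hi.eq_or_lt
  · exact hc.one_lt.le
  · exact hc.le i hi

theorem sum_range_lt (hq : IsConvergentDenom a q) (hc : IsOstrowskiDigits a c) (j : ℕ) :
    ∑ i ∈ range j, c (i + 1) * q i < q j := by
  induction j using Nat.twoStepInduction with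
  | zero => simp [hq.zero]
  | one => simpa [hq.zero, hq.one] using hc.one_lt
  | more j ih₀ ih₁ =>
    rw [sum_range_succ, hq.add_two j]
    rcases (hc.le (j + 2) (by omega)).lt_or_eq with hlt | heq
    · calc _ < (c (j + 2) + 1) * q (j + 1) := by linarith
        _ ≤ a (j + 2) * q (j + 1) := Nat.mul_le_mul_right _ hlt
        _ ≤ _ := Nat.le_add_right _ _
    · have hzero : c (j + 1) = 0 := hc.eq_zero_of_eq (j + 2) (by omega) heq
      rw [sum_range_succ, hzero, heq, zero_mul, add_zero]
      omega

theorem sum_range_add_two_lt (hq : IsConvergentDenom a q) (hc : IsOstrowskiDigits a c) (m : ℕ) :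
    ∑ i ∈ range (m + 2), c (i + 1) * q i < c (m + 2) * q (m + 1) + (c (m + 1) + 1) * q m := by
  rw [sum_range_succ, sum_range_succ]
  have := hc.sum_range_lt hq m
  linarith

end IsOstrowskiDigits

end

section ConstantQuotient

variable {a m N : ℕ}

theorem IsConvergentDenom.add_two_le_sq_add_two_mul (hq : IsConvergentDenom (fun _ => a) q)
    (m : ℕ) : q (m + 2) ≤ (a ^ 2 + 2) * q m := by
  cases m with
  | zero => simp only [hq.add_two, hq.zero, hq.one]; nlinarith
  | succ m =>
    have h₁ : q (m + 3) = a * q (m + 2) + q (m + 1) := hq.add_two (m + 1)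
    have h₂ : q (m + 2) = a * q (m + 1) + q m := hq.add_two m
    have h₃ : a * q m ≤ q (m + 1) := hq.mul_le_succ m
    rw [h₁, h₂]
    nlinarith

theorem IsOstrowskiDigits.mul_add_lt_sq (hq : IsConvergentDenom (fun _ => a) q)
    (hc : IsOstrowskiDigits (fun _ => a) c) (hN : q (m + 1) ≤ N)
    (hexp : N + 1 + ∑ i ∈ range (m + 2), c (i + 1) * q i = q (m + 2)) :
    a * c (m + 2) + c (m + 1) < a ^ 2 := by
  have hlow := le_sum_range_add_two c q m
  have hrec : q (m + 2) = a * q (m + 1) + q m := hq.add_two m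
  have hq₁ : a * q m ≤ q (m + 1) := hq.mul_le_succ m
  have ha : 0 < a := (Nat.zero_le _).trans_lt hc.one_lt
  have hc₂ : c (m + 2) ≤ a := hc.le (m + 2) (by omega)
  have hc₁ : c (m + 1) ≤ a := hc.le_of_one_le (by omega)
  have hlead : c (m + 2) * q (m + 1) + c (m + 1) * q m + q (m + 1) < a * q (m + 1) + q m := by
    omega
  -- Otherwise `c (m + 2) = a`, or `c (m + 2) = a - 1` and `c (m + 1) = a`; both contradict `hlead`.
  by_contra! hge
  have hc₂' : a ≤ c (m + 2) + 1 := Nat.le_of_mul_le_mul_left (by nlinarith) ha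
  rcases hc₂.lt_or_eq with hlt | heq
  · have hc₂a : c (m + 2) + 1 = a := by omega
    have hc₁a : c (m + 1) = a := by nlinarith
    rw [hc₁a, ← hc₂a] at hlead
    nlinarith
  · rw [heq] at hlead
    nlinarith

theorem IsOstrowskiDigits.sq_sub_mul_le (hq : IsConvergentDenom (fun _ => a) q)
    (hc : IsOstrowskiDigits (fun _ => a) c)
    (hexp : N + 1 + ∑ i ∈ range (m + 2), c (i + 1) * q i = q (m + 2)) :
    ((a : ℝ) ^ 2 - (a * c (m + 2) + c (m + 1))) * q m ≤ N := by
  have hsum := hc.sum_range_add_two_lt hq m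
  have hrec : q (m + 2) = a * q (m + 1) + q m := hq.add_two m
  have hN : a * q (m + 1) ≤ N + c (m + 2) * q (m + 1) + c (m + 1) * q m := by linarith
  have hN' : (a : ℝ) * q (m + 1) ≤ N + c (m + 2) * q (m + 1) + c (m + 1) * q m := by
    exact_mod_cast hN
  have hc₂ : (c (m + 2) : ℝ) ≤ a := by exact_mod_cast hc.le (m + 2) (by omega)
  have hq₁ : (a : ℝ) * q m ≤ q (m + 1) := by exact_mod_cast hq.mul_le_succ m
  calc ((a : ℝ) ^ 2 - (a * c (m + 2) + c (m + 1))) * q m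
      = (a - c (m + 2)) * (a * q m) - c (m + 1) * q m := by ring
    _ ≤ (a - c (m + 2)) * q (m + 1) - c (m + 1) * q m := by gcongr
    _ ≤ N := by linarith

theorem IsOstrowskiDigits.ratio_le (hq : IsConvergentDenom (fun _ => a) q)
    (hc : IsOstrowskiDigits (fun _ => a) c) (hN : q (m + 1) ≤ N)
    (hexp : N + 1 + ∑ i ∈ range (m + 2), c (i + 1) * q i = q (m + 2)) :
    ((q (m + 2) : ℝ) - 1) / N ≤ (a ^ 2 + 2) / (a ^ 2 - (a * c (m + 2) + c (m + 1))) := by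
  have hD : (0 : ℝ) < a ^ 2 - (a * c (m + 2) + c (m + 1)) := by
    rw [sub_pos]
    exact_mod_cast hc.mul_add_lt_sq hq hN hexp
  have hq₁ : 0 < q (m + 1) := hq.pos (fun _ => (Nat.zero_le _).trans_lt hc.one_lt) (m + 1)
  have hN₀ : (0 : ℝ) < N := by exact_mod_cast hq₁.trans_le hN
  have hup : (q (m + 2) : ℝ) ≤ (a ^ 2 + 2) * q m := by
    exact_mod_cast hq.add_two_le_sq_add_two_mul m
  have hlow := hc.sq_sub_mul_le hq hexp
  rw [div_le_div_iff₀ hN₀ hD]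
  set D : ℝ := a ^ 2 - (a * c (m + 2) + c (m + 1))
  calc ((q (m + 2) : ℝ) - 1) * D ≤ (a ^ 2 + 2) * q m * D := by gcongr; linarith
    _ = (a ^ 2 + 2) * (D * q m) := by ring
    _ ≤ (a ^ 2 + 2) * N := by gcongr

end ConstantQuotient

theorem ostrowski_ratio_bound
    (q : ℕ → ℕ) (h0 : q 0 = 1) (h1 : q 1 = 5)
    (hrec : ∀ m : ℕ, q (m + 2) = 5 * q (m + 1) + q m)
    (n : ℕ) (hn : 2 ≤ n) (N : ℕ) (hN1 : q n ≤ N) (hN2 : N < q (n + 1))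
    (c : ℕ → ℕ)
    (hexp : q (n + 1) - (N + 1) = ∑ i ∈ Finset.range (n + 1), c (i + 1) * q i)
    (hc1 : c 1 < 5) (hci : ∀ i : ℕ, 2 ≤ i → c i ≤ 5)
    (hrule : ∀ i : ℕ, 2 ≤ i → c i = 5 → c (i - 1) = 0) :
    ((q (n + 1) : ℝ) - 1) / N ≤
      27 / (25 - (5 * (c (n + 1) : ℝ) + (c n : ℝ))) := by
  obtain ⟨m, rfl⟩ : ∃ m, n = m + 1 := ⟨n - 1, by omega⟩
  have hq : IsConvergentDenom (fun _ => 5) q := ⟨h0, h1, hrec⟩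
  have hc : IsOstrowskiDigits (fun _ => 5) c := ⟨hc1, hci, hrule⟩
  have hsum : N + 1 + ∑ i ∈ range (m + 1 + 1), c (i + 1) * q i = q (m + 1 + 1) := by omega
  have h := hc.ratio_le hq hN1 hsum
  norm_num at h
  exact h
end

section
/- Let β be irrational with convergents p_k/q_k and write δ_k = ‖q_k β‖ (distance to the nearest integer). For any real ε and any k ≥ 1, the shifted Sudler product satisfies P_{q_k}(β, ε) = 2|sin(π(δ_k + ε/q_k))| · ∏_{n=1}^{q_k − 1} 2|sin(π(n p_k / q_k + (−1)^k ({n/q_k} − 1/2)δ_k + (−1)^k (2ε + q_k δ_k)/(2 q_k)))|, using β = p_k/q_k + (−1)^k δ_k / q_k. -/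
/-!
Substituting `β = p_k/q_k + (-1)^k δ_k/q_k`, the `r`-th factor has argument
`π (r p_k/q_k + (-1)^k (r δ_k + ε)/q_k)`. For `r = q_k` this is `π p_k ± π (δ_k + ε/q_k)`, and
`|sin|` ignores both the integer multiple of `π` and the sign. For `1 ≤ n < q_k` one has
`{n/q_k} = n/q_k`, and the stated argument is the same expression regrouped.
-/

open Real Finset

theorem abs_sin_add_int_mul_pi (x : ℝ) (n : ℤ) : |sin (x + n * π)| = |sin x| := by
  rw [sin_add_int_mul_pi, abs_mul, abs_neg_one_zpow, one_mul]

theorem abs_sin_neg_one_pow_mul (k : ℕ) (x : ℝ) : |sin ((-1) ^ k * x)| = |sin x| := by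
  rcases neg_one_pow_eq_or ℝ k with h | h <;> simp [h]

theorem prod_Icc_eq_mul_prod_Icc_sub_one {M : Type*} [CommMonoid M] (f : ℕ → M) {a q : ℕ}
    (ha : a ≤ q) (hq : 0 < q) : ∏ r ∈ Icc a q, f r = f q * ∏ n ∈ Icc a (q - 1), f n := by
  obtain ⟨m, rfl⟩ := Nat.exists_eq_add_of_lt hq
  rw [zero_add, prod_Icc_succ_top (by omega), Nat.add_sub_cancel, mul_comm]

theorem shifted_sudler_decomposition_general
    (β : ℝ) (k : ℕ)
    (pk : ℤ) (qk : ℕ) (hqk : 1 ≤ qk) (δ ε : ℝ)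
    (hconv : β = (pk : ℝ) / qk + (-1) ^ k * δ / qk) :
    ∏ r ∈ Finset.Icc 1 qk, 2 * |Real.sin (π * ((r : ℝ) * β + (-1) ^ k * ε / qk))| =
      2 * |Real.sin (π * (δ + ε / qk))| *
        ∏ n ∈ Finset.Icc 1 (qk - 1),
          2 * |Real.sin (π * ((n : ℝ) * pk / qk +
            (-1) ^ k * (Int.fract ((n : ℝ) / qk) - 1 / 2) * δ +
            (-1) ^ k * (2 * ε + qk * δ) / (2 * qk)))| := by
  have hq : (qk : ℝ) ≠ 0 := by positivity
  rw [prod_Icc_eq_mul_prod_Icc_sub_one _ hqk hqk]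
  congr 1
  · have htop : π * (qk * β + (-1) ^ k * ε / qk) = (-1) ^ k * (π * (δ + ε / qk)) + pk * π := by
      rw [hconv]; field_simp; ring
    rw [htop, abs_sin_add_int_mul_pi, abs_sin_neg_one_pow_mul]
  · refine prod_congr rfl fun n hn => ?_
    have hfract : Int.fract ((n : ℝ) / qk) = n / qk := by
      rw [Int.fract_div_natCast_eq_div_natCast_mod, Nat.mod_eq_of_lt (by grind)]
    rw [hfract, hconv]
    congr 3
    field_simp
    ring

theorem shifted_sudler_decomposition
    (β : ℝ) (hβ : Irrational β) (k : ℕ) (hk : 1 ≤ k)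
    (pk : ℤ) (qk : ℕ) (hqk : 1 ≤ qk) (δ ε : ℝ)
    (hδ : δ = |(qk : ℝ) * β - round ((qk : ℝ) * β)|)
    (hconv : β = (pk : ℝ) / qk + (-1) ^ k * δ / qk) :
    ∏ r ∈ Finset.Icc 1 qk, 2 * |Real.sin (π * ((r : ℝ) * β + (-1) ^ k * ε / qk))| =
      2 * |Real.sin (π * (δ + ε / qk))| *
        ∏ n ∈ Finset.Icc 1 (qk - 1),
          2 * |Real.sin (π * ((n : ℝ) * pk / qk +
            (-1) ^ k * (Int.fract ((n : ℝ) / qk) - 1 / 2) * δ +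
            (-1) ^ k * (2 * ε + qk * δ) / (2 * qk)))| :=
  shifted_sudler_decomposition_general β k pk qk hqk δ ε hconv
end
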